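/- Let (c₁,B₁),…,(cₘ,Bₘ) be a Brascamp–Lieb datum on ℝⁿ with Σᵢ cᵢ nᵢ = n, and suppose the positive definite n×n matrix A satisfies A⁻¹ = Σᵢ cᵢ Bᵢ* (Bᵢ A Bᵢ*)⁻¹ Bᵢ. Then the functions fᵢ(x) = exp(−⟨Bᵢ A Bᵢ* x, x⟩/2) on ℝ^{nᵢ} and f(x) = exp(−⟨A x, x⟩/2) on ℝⁿ satisfy ∏ᵢ fᵢ(xᵢ)^{cᵢ} ≤ f(Σᵢ cᵢ Bᵢ* xᵢ) for all (x₁,…,xₘ), and they achieve equality in the reversed Brascamp–Lieb inequality: ∏ᵢ (∫_{ℝ^{nᵢ}} fᵢ dx)^{cᵢ} = C_r ∫_{ℝⁿ} f dx, where C_r = (det(A) / ∏ᵢ det(Bᵢ A Bᵢ*)^{cᵢ})^{1/2}. -/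

import Mathlib

/-!
Writing `y = ∑ cᵢ Bᵢ* xᵢ`, the pointwise inequality is `⟨A y, y⟩ ≤ ∑ cᵢ ⟨Mᵢ xᵢ, xᵢ⟩` with
`Mᵢ = Bᵢ A Bᵢ*`. It follows by summing, with weights `cᵢ`, the Fenchel inequality
`2 ⟨u, x⟩ - ⟨M⁻¹ u, u⟩ ≤ ⟨M x, x⟩` of the positive definite `Mᵢ` at `u = Bᵢ A y`: the hypothesis
on `A⁻¹` collapses the sum of the dual terms to `⟨A⁻¹ (A y), A y⟩ = ⟨A y, y⟩`.

All integrals are Gaussian, `∫ exp (-⟨M x, x⟩ / 2) = (2π)^(k/2) / √(det M)` (substitute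
`x = M^(-1/2) z`), and `∑ cᵢ nᵢ = n` makes the powers of `2π` on both sides agree.
-/

open MeasureTheory Matrix

namespace Matrix

variable {n : Type*} [Fintype n]

theorem PosDef.mul_mul_transpose_of_surjective {m : Type*} [Fintype m] [DecidableEq m]
    {A : Matrix n n ℝ} (hA : A.PosDef) {B : Matrix m n ℝ} (hB : Function.Surjective B.mulVec) :
    (B * A * Bᵀ).PosDef := by
  obtain ⟨R, hBR⟩ := mulVec_surjective_iff_exists_right_inverse.mp hB
  refine hA.mul_mul_conjTranspose_same fun v w hvw => ?_
  simpa [vecMul_vecMul, hBR] using congrArg (· ᵥ* R) hvw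

theorem PosDef.two_mul_dotProduct_sub_inv_le [DecidableEq n] {M : Matrix n n ℝ} (hM : M.PosDef)
    (x u : n → ℝ) :
    2 * (u ⬝ᵥ x) - M⁻¹ *ᵥ u ⬝ᵥ u ≤ M *ᵥ x ⬝ᵥ x := by
  set w := M⁻¹ *ᵥ u
  have hMw : M *ᵥ w = u := by
    rw [mulVec_mulVec, mul_nonsing_inv _ hM.det_pos.ne'.isUnit, one_mulVec]
  have hsymm : ∀ v, M *ᵥ v ⬝ᵥ w = v ⬝ᵥ u := fun v => by
    rw [dotProduct_comm, ← hMw, ← dotProduct_transpose_mulVec,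
      (isHermitian_iff_isSymm.mp hM.isHermitian).eq]
  have hsq : 0 ≤ M *ᵥ (x - w) ⬝ᵥ (x - w) := by
    simpa [dotProduct_comm] using hM.posSemidef.dotProduct_mulVec_nonneg (x - w)
  rw [mulVec_sub, sub_dotProduct, dotProduct_sub, dotProduct_sub, hsymm, hsymm, hMw] at hsq
  rw [dotProduct_comm w u, dotProduct_comm u x] at *
  linarith

theorem dotProduct_mulVec_le_sum_of_inv_eq_sum [DecidableEq n] {ι : Type*} [Fintype ι]
    {κ : ι → Type*} [∀ i, Fintype (κ i)] [∀ i, DecidableEq (κ i)] {A : Matrix n n ℝ}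
    (hA : IsUnit A.det) {c : ι → ℝ} (hc : ∀ i, 0 ≤ c i) {B : ∀ i, Matrix (κ i) n ℝ}
    {M : ∀ i, Matrix (κ i) (κ i) ℝ} (hM : ∀ i, (M i).PosDef)
    (hAinv : A⁻¹ = ∑ i, c i • ((B i)ᵀ * (M i)⁻¹ * B i)) (x : ∀ i, κ i → ℝ) :
    A *ᵥ (∑ i, c i • (B i)ᵀ *ᵥ x i) ⬝ᵥ (∑ i, c i • (B i)ᵀ *ᵥ x i) ≤
      ∑ i, c i * (M i *ᵥ x i ⬝ᵥ x i) := by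
  set y := ∑ i, c i • (B i)ᵀ *ᵥ x i
  set g := A *ᵥ y
  have hlin : g ⬝ᵥ y = ∑ i, c i * (B i *ᵥ g ⬝ᵥ x i) := by
    simp only [y, dotProduct_sum, dotProduct_smul, smul_eq_mul, dotProduct_transpose_mulVec,
      dotProduct_comm (x _)]
  have hquad : A⁻¹ *ᵥ g ⬝ᵥ g = ∑ i, c i * ((M i)⁻¹ *ᵥ (B i *ᵥ g) ⬝ᵥ B i *ᵥ g) := by
    simp only [hAinv, sum_mulVec, smul_mulVec, sum_dotProduct, smul_dotProduct, smul_eq_mul,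
      ← mulVec_mulVec]
    refine Finset.sum_congr rfl fun i _ => ?_
    rw [dotProduct_comm, dotProduct_transpose_mulVec]
  calc A *ᵥ y ⬝ᵥ y = 2 * (g ⬝ᵥ y) - A⁻¹ *ᵥ g ⬝ᵥ g := by
        rw [mulVec_mulVec, nonsing_inv_mul _ hA, one_mulVec, dotProduct_comm y g]; ring
    _ = ∑ i, c i * (2 * (B i *ᵥ g ⬝ᵥ x i) - (M i)⁻¹ *ᵥ (B i *ᵥ g) ⬝ᵥ B i *ᵥ g) := by
        simp only [hlin, hquad, mul_sub, Finset.sum_sub_distrib, Finset.mul_sum]; ring_nf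
    _ ≤ ∑ i, c i * (M i *ᵥ x i ⬝ᵥ x i) := Finset.sum_le_sum fun i _ =>
        mul_le_mul_of_nonneg_left ((hM i).two_mul_dotProduct_sub_inv_le _ _) (hc i)

theorem integral_comp_mulVec [DecidableEq n] {E : Type*} [NormedAddCommGroup E]
    [NormedSpace ℝ E] {T : Matrix n n ℝ} (hT : T.det ≠ 0) (g : (n → ℝ) → E) :
    ∫ x, g (T *ᵥ x) = |T.det|⁻¹ • ∫ x, g x := by
  have hemb : MeasurableEmbedding (toLin' T) :=
    (LinearMap.continuous_on_pi _).measurableEmbedding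
      (mulVec_injective_iff_isUnit.mpr ((isUnit_iff_isUnit_det T).mpr hT.isUnit))
  change ∫ x, g (toLin' T x) = _
  rw [← hemb.integral_map, Real.map_matrix_volume_pi_eq_smul_volume_pi hT,
    integral_smul_measure, ENNReal.toReal_ofReal (by positivity), abs_inv]

end Matrix

section Gaussian

variable {n : Type*} [Fintype n]

theorem integral_exp_neg_dotProduct_self_div_two :
    ∫ x : n → ℝ, Real.exp (-(x ⬝ᵥ x) / 2) = √(2 * Real.pi) ^ Fintype.card n := by
  have hprod : ∀ x : n → ℝ, Real.exp (-(x ⬝ᵥ x) / 2) = ∏ i, Real.exp (-(1 / 2) * x i ^ 2) := by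
    intro x
    rw [← Real.exp_sum, dotProduct, ← Finset.sum_neg_distrib, Finset.sum_div]
    congr 1
    exact Finset.sum_congr rfl fun i _ => by ring
  simp only [hprod]
  rw [integral_fintype_prod_volume_eq_pow (fun t : ℝ => Real.exp (-(1 / 2) * t ^ 2)),
    integral_gaussian]
  norm_num [div_eq_mul_inv, mul_comm]

open scoped MatrixOrder in
theorem Matrix.PosDef.integral_exp_neg_mulVec_dotProduct_div_two [DecidableEq n]
    {M : Matrix n n ℝ} (hM : M.PosDef) :
    ∫ x : n → ℝ, Real.exp (-(M *ᵥ x ⬝ᵥ x) / 2) =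
      √(2 * Real.pi) ^ Fintype.card n / √M.det := by
  set S := CFC.sqrt M
  have hdetS : S.det = √M.det := by simpa using hM.posSemidef.det_sqrt
  have hdetS_pos : 0 < S.det := by rw [hdetS]; exact Real.sqrt_pos.mpr hM.det_pos
  have hquad : ∀ x, M *ᵥ x ⬝ᵥ x = S *ᵥ x ⬝ᵥ S *ᵥ x := fun x => by
    rw [← CFC.sqrt_mul_sqrt_self M hM.posSemidef.nonneg, ← mulVec_mulVec, dotProduct_comm,
      ← dotProduct_transpose_mulVec,
      (isHermitian_iff_isSymm.mp (CFC.sqrt_nonneg M).posSemidef.isHermitian).eq]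
  simp only [hquad]
  rw [integral_comp_mulVec hdetS_pos.ne' (fun y => Real.exp (-(y ⬝ᵥ y) / 2)),
    integral_exp_neg_dotProduct_self_div_two, abs_of_pos hdetS_pos, hdetS, smul_eq_mul,
    inv_mul_eq_div]

end Gaussian

theorem Real.prod_pow_div_sqrt_rpow {ι : Type*} [Fintype ι] {s : ℝ} (hs : 0 < s) (k : ι → ℕ)
    {D : ι → ℝ} (hD : ∀ i, 0 < D i) (c : ι → ℝ) :
    ∏ i, (s ^ k i / √(D i)) ^ c i = s ^ (∑ i, c i * k i) / √(∏ i, D i ^ c i) := by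
  have hsqrt : ∀ i, √(D i) ^ c i = √(D i ^ c i) := fun i => by
    rw [Real.sqrt_eq_rpow, Real.sqrt_eq_rpow, ← Real.rpow_mul (hD i).le, mul_comm,
      Real.rpow_mul (hD i).le]
  have hpow : ∀ i, (s ^ k i) ^ c i = s ^ (c i * k i) := fun i => by
    rw [← Real.rpow_natCast, ← Real.rpow_mul hs.le, mul_comm]
  simp only [Real.div_rpow (pow_nonneg hs.le _) (Real.sqrt_nonneg _), Finset.prod_div_distrib,
    hsqrt, hpow, ← Real.rpow_sum_of_pos hs]
  rw [Real.sqrt_prod _ fun i _ => (Real.rpow_pos_of_pos (hD i) _).le]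

/-- **Equality case in the reversed Brascamp–Lieb inequality** (Theorem 4 of the paper).
Under the condition `A⁻¹ = ∑ cᵢ Bᵢ* (Bᵢ A Bᵢ*)⁻¹ Bᵢ`, the Gaussian functions
`fᵢ(x) = exp(−⟨Bᵢ A Bᵢ* x, x⟩/2)` and `f(x) = exp(−⟨A x, x⟩/2)` satisfy the splitting
hypothesis and achieve equality in the reversed Brascamp–Lieb inequality with constant
`C_r = (det A / ∏ det (Bᵢ A Bᵢ*)^{cᵢ})^{1/2}`. -/
theorem reversed_brascamp_lieb_equality_case
    (m n : ℕ) (ni : Fin m → ℕ) (c : Fin m → ℝ) (hc : ∀ i, 0 < c i)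
    (B : ∀ i, Matrix (Fin (ni i)) (Fin n) ℝ)
    (hB : ∀ i, Function.Surjective (B i).mulVec)
    (hdim : ∑ i, c i * (ni i : ℝ) = (n : ℝ))
    (A : Matrix (Fin n) (Fin n) ℝ) (hA : A.PosDef)
    (hjohn : A⁻¹ = ∑ i, c i • ((B i)ᵀ * (B i * A * (B i)ᵀ)⁻¹ * B i))
    (f : ∀ i, (Fin (ni i) → ℝ) → ℝ) (F : (Fin n → ℝ) → ℝ)
    (hf : ∀ i x, f i x = Real.exp (- ((B i * A * (B i)ᵀ).mulVec x ⬝ᵥ x) / 2))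
    (hF : ∀ x, F x = Real.exp (- (A.mulVec x ⬝ᵥ x) / 2)) :
    (∀ x : ∀ i, Fin (ni i) → ℝ,
      ∏ i, (f i (x i)) ^ (c i) ≤ F (∑ i, c i • (B i)ᵀ.mulVec (x i))) ∧
    ∏ i, (∫ y : Fin (ni i) → ℝ, f i y) ^ (c i) =
      Real.sqrt (A.det / ∏ i, ((B i * A * (B i)ᵀ).det) ^ (c i)) *
        ∫ x : Fin n → ℝ, F x := by
  have hM : ∀ i, (B i * A * (B i)ᵀ).PosDef := fun i => hA.mul_mul_transpose_of_surjective (hB i)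
  refine ⟨fun x => ?_, ?_⟩
  · have hquad := dotProduct_mulVec_le_sum_of_inv_eq_sum hA.det_pos.ne'.isUnit
      (fun i => (hc i).le) hM hjohn x
    simp only [hf, hF, ← Real.exp_mul, ← Real.exp_sum, Real.exp_le_exp]
    calc _ = -(∑ i, c i * ((B i * A * (B i)ᵀ) *ᵥ x i ⬝ᵥ x i)) / 2 := by
          rw [neg_div, Finset.sum_div, ← Finset.sum_neg_distrib]
          exact Finset.sum_congr rfl fun i _ => by ring
      _ ≤ _ := by linarith
  · have hdet : ∀ i, 0 < (B i * A * (B i)ᵀ).det := fun i => (hM i).det_pos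
    simp only [hf, hF, PosDef.integral_exp_neg_mulVec_dotProduct_div_two, hA, hM,
      Fintype.card_fin]
    rw [Real.prod_pow_div_sqrt_rpow (Real.sqrt_pos.mpr Real.two_pi_pos) ni hdet, hdim,
      Real.rpow_natCast,
      Real.sqrt_div' _ (Finset.prod_nonneg fun i _ => (Real.rpow_pos_of_pos (hdet i) _).le)]
    have hsqrt_detA := Real.sqrt_pos.mpr hA.det_pos
    field_simp
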